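/- arXiv:1507.03711 — 4 statements merged into one kernel-verified Lean document; each statement's English description precedes it below -/
import Mathlib

section
/- Let J : ℝ → ℝ be a nonnegative integrable kernel with ∫ J = 1, and let ṽ : [t₀,∞) × ℝ → ℝ be continuous, differentiable in t, nonpositive, and satisfy ṽ_t(t,x) ≤ (J ∗ ṽ(t,·))(x) for all t > t₀ and x ∈ ℝ. Then for every t ≥ t₀ and x ∈ ℝ, ṽ(t,x) ≤ (t − t₀)·(J ∗ ṽ(t₀,·))(x) + ṽ(t₀,x), and in particular ṽ(t,x) ≤ (t − t₀)·(J ∗ ṽ(t₀,·))(x). -/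
/-!
Comparing `ṽ_t` with the constant `0 ≥ J ∗ ṽ` shows that `ṽ` is nonincreasing in time. Then
`J ∗ ṽ(t, ·) ≤ J ∗ ṽ(t₀, ·)` for `t ≥ t₀` because `J ≥ 0`, so `ṽ_t` is bounded by the constant
`J ∗ ṽ(t₀, ·)(x)`, and the mean value inequality gives the bound.
-/

open MeasureTheory Set

theorem le_add_mul_sub_of_hasDerivAt_le {f f' : ℝ → ℝ} {a C : ℝ}
    (hf : ContinuousOn f (Ici a)) (hf' : ∀ t > a, HasDerivAt f (f' t) t)
    (hle : ∀ t > a, f' t ≤ C) {t : ℝ} (ht : a ≤ t) : f t ≤ f a + C * (t - a) := by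
  have hint : ∀ s ∈ interior (Ici a), a < s := fun s hs => interior_Ici.subset hs
  have := (convex_Ici a).image_sub_le_mul_sub_of_deriv_le hf
    (fun s hs => (hf' s (hint s hs)).differentiableAt.differentiableWithinAt)
    (fun s hs => (hf' s (hint s hs)).deriv ▸ hle s (hint s hs)) a self_mem_Ici t ht ht
  linarith

theorem stmt0_general
    (J : ℝ → ℝ) (v dv : ℝ → ℝ → ℝ) (t₀ : ℝ)
    (hJpos : ∀ x, 0 ≤ J x)
    (hvcont : Continuous fun p : ℝ × ℝ => v p.1 p.2)
    (hvle : ∀ t x, t₀ ≤ t → v t x ≤ 0)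
    (hvint : ∀ t x, t₀ ≤ t → Integrable fun y => J (x - y) * v t y)
    (hderiv : ∀ x, ∀ t > t₀, HasDerivAt (fun s => v s x) (dv t x) t)
    (hineq : ∀ x, ∀ t > t₀, dv t x ≤ ∫ y, J (x - y) * v t y) :
    ∀ t ≥ t₀, ∀ x,
      v t x ≤ (t - t₀) * (∫ y, J (x - y) * v t₀ y) + v t₀ x ∧
      v t x ≤ (t - t₀) * (∫ y, J (x - y) * v t₀ y) := by
  have hcont : ∀ x, ContinuousOn (fun s => v s x) (Ici t₀) := fun x =>
    (hvcont.comp (continuous_id.prodMk continuous_const)).continuousOn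
  have hantitone : ∀ y, ∀ s ≥ t₀, v s y ≤ v t₀ y := fun y s hs => by
    have := le_add_mul_sub_of_hasDerivAt_le (hcont y) (hderiv y)
      (fun r hr => (hineq y r hr).trans <| integral_nonpos fun z =>
        mul_nonpos_of_nonneg_of_nonpos (hJpos _) (hvle r z hr.le)) hs
    linarith
  intro t ht x
  have hbound : v t x ≤ v t₀ x + (∫ y, J (x - y) * v t₀ y) * (t - t₀) :=
    le_add_mul_sub_of_hasDerivAt_le (hcont x) (hderiv x)
      (fun s hs => (hineq x s hs).trans <| integral_mono (hvint s x hs.le) (hvint t₀ x le_rfl)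
        fun y => mul_le_mul_of_nonneg_left (hantitone y s hs.le) (hJpos _)) ht
  have hv₀ := hvle t₀ x le_rfl
  constructor <;> linarith

/-- Gronwall-type integral bound for a nonpositive subsolution of
`ṽ_t ≤ J ∗ ṽ`. -/
theorem stmt0
    (J : ℝ → ℝ) (v dv : ℝ → ℝ → ℝ) (t₀ : ℝ)
    (hJint : Integrable J)
    (hJpos : ∀ x, 0 ≤ J x)
    (hJ1 : (∫ x, J x) = 1)
    (hvcont : Continuous fun p : ℝ × ℝ => v p.1 p.2)
    (hvle : ∀ t x, t₀ ≤ t → v t x ≤ 0)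
    (hvbdd : ∃ B, ∀ t x, |v t x| ≤ B)
    (hvint : ∀ t x, t₀ ≤ t → Integrable fun y => J (x - y) * v t y)
    (hderiv : ∀ x, ∀ t > t₀, HasDerivAt (fun s => v s x) (dv t x) t)
    (hineq : ∀ x, ∀ t > t₀, dv t x ≤ ∫ y, J (x - y) * v t y) :
    ∀ t ≥ t₀, ∀ x,
      v t x ≤ (t - t₀) * (∫ y, J (x - y) * v t₀ y) + v t₀ x ∧
      v t x ≤ (t - t₀) * (∫ y, J (x - y) * v t₀ y) :=
  stmt0_general J v dv t₀ hJpos hvcont hvle hvint hderiv hineq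
end

section
/- Let K : ℝ × ℝ → [0,∞) be continuous with sup_x ∫_ℝ K(x,y) dy < ∞, and let a : ℝ × ℝ → ℝ be continuous and uniformly bounded. Suppose u : [0,∞) × ℝ → ℝ and u_t are continuous, inf_{t ≥ 0, x ∈ ℝ} u(t,x) > −∞, u(0,·) ≥ 0, and u_t(t,x) ≥ ∫_ℝ K(x,y) u(t,y) dy + a(t,x) u(t,x) for all t > 0, x ∈ ℝ. Then u(t,x) ≥ 0 for all (t,x) ∈ (0,∞) × ℝ. -/
/-!
Fix a window `[t₀, t₀ + T]` with `u(t₀, ·) ≥ 0` on which `u ≥ μ` for some `μ ≤ 0`. Wherever `u`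
is negative, the inequality and the bounds `∫ K(x, y) dy ≤ B_K`, `|a| ≤ B_a` give
`u_t ≥ (B_K + B_a) μ`, so `u ≥ (B_K + B_a) μ T ≥ μ / 2` on the window once `(B_K + B_a) T ≤ 1/2`.
Starting from the global lower bound `m`, this yields `u ≥ m / 2ⁿ` for every `n`, hence `u ≥ 0` on
the window; since `T` does not depend on `t₀`, the windows cover `[0, ∞)`.
-/

open MeasureTheory Set Filter

theorem nonneg_of_hasDerivAt_nonneg_of_neg {g g' : ℝ → ℝ} {a b : ℝ} (hab : a ≤ b)
    (hg : ContinuousOn g (Icc a b)) (hg' : ∀ x ∈ Ioo a b, HasDerivAt g (g' x) x)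
    (hneg : ∀ x ∈ Ioo a b, g x < 0 → 0 ≤ g' x) (ha : 0 ≤ g a) : 0 ≤ g b := by
  by_contra! hb
  set S := Icc a b ∩ g ⁻¹' Ici 0
  have hbdd : BddAbove S := bddAbove_Icc.mono inter_subset_left
  have hrS : sSup S ∈ S :=
    (hg.preimage_isClosed_of_isClosed isClosed_Icc isClosed_Ici).csSup_mem
      ⟨a, left_mem_Icc.2 hab, ha⟩ hbdd
  set r := sSup S
  have hrb : r < b := hrS.1.2.lt_of_ne fun h => (h ▸ hrS.2 : 0 ≤ g b).not_gt hb
  have hsub : Icc r b ⊆ Icc a b := Icc_subset_Icc_left hrS.1.1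
  -- past the last zero `r` of `g` on `[a, b]`, `g` stays negative, hence is nondecreasing
  have hmono : MonotoneOn g (Icc r b) := by
    refine monotoneOn_of_hasDerivWithinAt_nonneg (f' := g') (convex_Icc r b) (hg.mono hsub)
      (fun x hx => ?_) (fun x hx => ?_) <;> rw [interior_Icc] at hx
    · exact (hg' x ⟨hrS.1.1.trans_lt hx.1, hx.2⟩).hasDerivWithinAt
    · refine hneg x ⟨hrS.1.1.trans_lt hx.1, hx.2⟩ (not_le.1 fun hgx => hx.1.not_ge ?_)
      exact le_csSup hbdd ⟨hsub (Ioo_subset_Icc_self hx), hgx⟩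
  exact hb.not_ge (hrS.2.trans (hmono (left_mem_Icc.2 hrb.le) (right_mem_Icc.2 hrb.le) hrb.le))

theorem zero_mem_lowerBounds_of_half_mem {S : Set ℝ} {m : ℝ} (hm : m ∈ lowerBounds S)
    (hhalf : ∀ μ ≤ 0, μ ∈ lowerBounds S → μ / 2 ∈ lowerBounds S) : 0 ∈ lowerBounds S := by
  have hpow : ∀ n : ℕ, min m 0 / 2 ^ n ∈ lowerBounds S := by
    intro n
    induction n with
    | zero =>
      simpa using show min m 0 ∈ lowerBounds S from fun x hx => (min_le_left m 0).trans (hm hx)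
    | succ n ih =>
      rw [pow_succ, ← div_div]
      exact hhalf _ (div_nonpos_of_nonpos_of_nonneg (min_le_right m 0) (by positivity)) ih
  have hlim : Tendsto (fun n : ℕ => min m 0 / 2 ^ n) atTop (nhds 0) :=
    tendsto_const_nhds.div_atTop (tendsto_pow_atTop_atTop_of_one_lt one_lt_two)
  exact fun x hx => le_of_tendsto' hlim fun n => hpow n hx

theorem forall_ge_zero_of_forall_Icc_add {P : ℝ → Prop} {T : ℝ} (hT : 0 < T) (h0 : P 0)
    (hstep : ∀ t₀ ≥ 0, P t₀ → ∀ t ∈ Icc t₀ (t₀ + T), P t) : ∀ t ≥ 0, P t := by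
  have hn : ∀ n : ℕ, ∀ t ∈ Icc 0 (n * T), P t := by
    intro n
    induction n with
    | zero =>
      intro t ht
      simpa [le_antisymm (by simpa using ht.2) ht.1] using h0
    | succ n ih =>
      intro t ht
      have hnT : (0 : ℝ) ≤ n * T := by positivity
      rcases le_or_gt t (n * T) with h | h
      · exact ih t ⟨ht.1, h⟩
      · exact hstep _ hnT (ih _ ⟨hnT, le_rfl⟩) t ⟨h.le, by push_cast at ht; linarith [ht.2]⟩
  intro t ht
  obtain ⟨n, hn'⟩ := exists_nat_ge (t / T)
  exact hn n t ⟨ht, (div_le_iff₀ hT).1 hn'⟩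

theorem mul_le_integral_mul {α : Type*} [MeasurableSpace α] {ν : Measure α} {k v : α → ℝ}
    {B c : ℝ} (hk : 0 ≤ k) (hki : Integrable k ν) (hkv : Integrable (fun y => k y * v y) ν)
    (hB : ∫ y, k y ∂ν ≤ B) (hc : c ≤ 0) (hv : ∀ y, c ≤ v y) :
    B * c ≤ ∫ y, k y * v y ∂ν :=
  calc B * c ≤ (∫ y, k y ∂ν) * c := mul_le_mul_of_nonpos_right hB hc
    _ = ∫ y, k y * c ∂ν := (integral_mul_const c k).symm
    _ ≤ ∫ y, k y * v y ∂ν :=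
      integral_mono (hki.mul_const c) hkv fun y => mul_le_mul_of_nonneg_left (hv y) (hk y)

theorem add_mul_le_of_integral_mul_add_mul_le {X : Type*} [MeasurableSpace X] {ν : Measure X}
    {k v : X → ℝ} {x : X} {α w BK Ba μ : ℝ} (hk : 0 ≤ k) (hki : Integrable k ν)
    (hkv : Integrable (fun y => k y * v y) ν) (hBK : ∫ y, k y ∂ν ≤ BK) (hα : |α| ≤ Ba)
    (hw : ∫ y, k y * v y ∂ν + α * v x ≤ w) (hμ : μ ≤ 0) (hv : ∀ y, μ ≤ v y) (hvx : v x ≤ 0) :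
    (BK + Ba) * μ ≤ w := by
  have hnonlocal := mul_le_integral_mul hk hki hkv hBK hμ hv
  have hlocal : Ba * μ ≤ α * v x :=
    calc Ba * μ ≤ Ba * v x := mul_le_mul_of_nonneg_left (hv x) ((abs_nonneg α).trans hα)
      _ ≤ |α| * v x := mul_le_mul_of_nonpos_right hα hvx
      _ ≤ α * v x := mul_le_mul_of_nonpos_right (le_abs_self α) hvx
  linarith

section window

variable {u ut : ℝ → ℝ → ℝ} {C T t₀ : ℝ}

theorem mul_sub_le_of_mem_lowerBounds (hC : 0 ≤ C) (ht₀ : 0 ≤ t₀)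
    (hucont : Continuous fun p : ℝ × ℝ => u p.1 p.2)
    (hderiv : ∀ x : ℝ, ∀ t > (0:ℝ), HasDerivAt (fun s => u s x) (ut t x) t)
    (hut : ∀ s > (0:ℝ), ∀ μ ≤ 0, (∀ y, μ ≤ u s y) → ∀ x, u s x < 0 → C * μ ≤ ut s x)
    (hinit : ∀ y, 0 ≤ u t₀ y) {μ : ℝ} (hμ : μ ≤ 0)
    (hμu : μ ∈ lowerBounds (image2 u (Icc t₀ (t₀ + T)) univ)) {t : ℝ}
    (ht : t ∈ Icc t₀ (t₀ + T)) (x : ℝ) : C * μ * (t - t₀) ≤ u t x := by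
  have hg := nonneg_of_hasDerivAt_nonneg_of_neg (g := fun s => u s x - C * μ * (s - t₀))
    (g' := fun s => ut s x - C * μ) ht.1
    ((hucont.comp (continuous_id.prodMk continuous_const)).sub (by fun_prop)).continuousOn
    (fun s hs => by
      simpa only [mul_one] using (hderiv x s (ht₀.trans_lt hs.1)).fun_sub
        (((hasDerivAt_id' s).sub_const t₀).const_mul (C * μ)))
    (fun s hs hgs => by
      have hbarrier : C * μ * (s - t₀) ≤ 0 :=
        mul_nonpos_of_nonpos_of_nonneg (mul_nonpos_of_nonneg_of_nonpos hC hμ) (sub_nonneg.2 hs.1.le)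
      have hs' : s ∈ Icc t₀ (t₀ + T) := ⟨hs.1.le, hs.2.le.trans ht.2⟩
      exact sub_nonneg.2 (hut s (ht₀.trans_lt hs.1) μ hμ
        (fun y => hμu (mem_image2_of_mem hs' (mem_univ y))) x (by linarith)))
    (by simpa using hinit x)
  linarith

theorem half_mem_lowerBounds_window (hC : 0 ≤ C) (hCT : C * T ≤ 1 / 2) (ht₀ : 0 ≤ t₀)
    (hucont : Continuous fun p : ℝ × ℝ => u p.1 p.2)
    (hderiv : ∀ x : ℝ, ∀ t > (0:ℝ), HasDerivAt (fun s => u s x) (ut t x) t)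
    (hut : ∀ s > (0:ℝ), ∀ μ ≤ 0, (∀ y, μ ≤ u s y) → ∀ x, u s x < 0 → C * μ ≤ ut s x)
    (hinit : ∀ y, 0 ≤ u t₀ y) {μ : ℝ} (hμ : μ ≤ 0)
    (hμu : μ ∈ lowerBounds (image2 u (Icc t₀ (t₀ + T)) univ)) :
    μ / 2 ∈ lowerBounds (image2 u (Icc t₀ (t₀ + T)) univ) := by
  rintro _ ⟨t, ht, x, -, rfl⟩
  have hdecay : C * (t - t₀) ≤ 1 / 2 :=
    (mul_le_mul_of_nonneg_left (by linarith [ht.2]) hC).trans hCT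
  calc μ / 2 ≤ C * μ * (t - t₀) := by nlinarith
    _ ≤ u t x := mul_sub_le_of_mem_lowerBounds hC ht₀ hucont hderiv hut hinit hμ hμu ht x

theorem nonneg_on_window (hC : 0 ≤ C) (hCT : C * T ≤ 1 / 2) (ht₀ : 0 ≤ t₀)
    (hucont : Continuous fun p : ℝ × ℝ => u p.1 p.2)
    (hderiv : ∀ x : ℝ, ∀ t > (0:ℝ), HasDerivAt (fun s => u s x) (ut t x) t)
    (hut : ∀ s > (0:ℝ), ∀ μ ≤ 0, (∀ y, μ ≤ u s y) → ∀ x, u s x < 0 → C * μ ≤ ut s x)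
    (hinit : ∀ y, 0 ≤ u t₀ y) {m : ℝ} (hm : m ∈ lowerBounds (image2 u (Icc t₀ (t₀ + T)) univ))
    {t : ℝ} (ht : t ∈ Icc t₀ (t₀ + T)) (x : ℝ) : 0 ≤ u t x :=
  zero_mem_lowerBounds_of_half_mem hm
    (fun _ hμ hμu => half_mem_lowerBounds_window hC hCT ht₀ hucont hderiv hut hinit hμ hμu)
    (mem_image2_of_mem ht (mem_univ x))

end window

theorem stmt5_general
    (K : ℝ → ℝ → ℝ) (a u ut : ℝ → ℝ → ℝ)
    (hKpos : ∀ x y, 0 ≤ K x y)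
    (hKint : ∀ x, Integrable (K x))
    (hKbdd : ∃ B : ℝ, ∀ x, (∫ y, K x y) ≤ B)
    (habdd : ∃ B : ℝ, ∀ t x, |a t x| ≤ B)
    (hucont : Continuous fun p : ℝ × ℝ => u p.1 p.2)
    (hbelow : ∃ m : ℝ, ∀ t ≥ (0:ℝ), ∀ x, m ≤ u t x)
    (huint : ∀ t ≥ (0:ℝ), ∀ x, Integrable fun y => K x y * u t y)
    (hderiv : ∀ x : ℝ, ∀ t > (0:ℝ), HasDerivAt (fun s => u s x) (ut t x) t)
    (hineq : ∀ x : ℝ, ∀ t > (0:ℝ), (∫ y, K x y * u t y) + a t x * u t x ≤ ut t x)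
    (h0 : ∀ x, 0 ≤ u 0 x) :
    ∀ t > (0:ℝ), ∀ x, 0 ≤ u t x := by
  obtain ⟨BK, hBK⟩ := hKbdd
  obtain ⟨Ba, hBa⟩ := habdd
  obtain ⟨m, hm⟩ := hbelow
  have hC : 0 ≤ BK + Ba :=
    add_nonneg ((integral_nonneg (hKpos 0)).trans (hBK 0)) ((abs_nonneg _).trans (hBa 0 0))
  have hut : ∀ s > (0:ℝ), ∀ μ ≤ 0, (∀ y, μ ≤ u s y) → ∀ x, u s x < 0 →
      (BK + Ba) * μ ≤ ut s x := fun s hs μ hμ hμu x hux =>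
    add_mul_le_of_integral_mul_add_mul_le (hKpos x) (hKint x) (huint s hs.le x) (hBK x)
      (hBa s x) (hineq x s hs) hμ hμu hux.le
  obtain ⟨T, hT, hCT⟩ : ∃ T > 0, (BK + Ba) * T ≤ 1 / 2 :=
    ⟨1 / (2 * (BK + Ba + 1)), by positivity, by
      rw [mul_one_div, div_le_iff₀ (by positivity)]; linarith⟩
  have hmW : ∀ t₀ ≥ (0:ℝ), m ∈ lowerBounds (image2 u (Icc t₀ (t₀ + T)) univ) := by
    rintro t₀ ht₀ _ ⟨s, hs, y, -, rfl⟩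
    exact hm s (ht₀.trans hs.1) y
  intro t ht
  exact forall_ge_zero_of_forall_Icc_add (P := fun t => ∀ x, 0 ≤ u t x) hT h0
    (fun t₀ ht₀ hinit s hs => nonneg_on_window hC hCT ht₀ hucont hderiv hut hinit (hmW t₀ ht₀) hs)
    t ht.le

/-- comparison principle for nonlocal linear evolution
inequalities (Proposition A.1(iii), nonnegativity). -/
theorem stmt5
    (K : ℝ → ℝ → ℝ) (a u ut : ℝ → ℝ → ℝ)
    (hKcont : Continuous fun p : ℝ × ℝ => K p.1 p.2)
    (hKpos : ∀ x y, 0 ≤ K x y)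
    (hKint : ∀ x, Integrable (K x))
    (hKbdd : ∃ B : ℝ, ∀ x, (∫ y, K x y) ≤ B)
    (hacont : Continuous fun p : ℝ × ℝ => a p.1 p.2)
    (habdd : ∃ B : ℝ, ∀ t x, |a t x| ≤ B)
    (hucont : Continuous fun p : ℝ × ℝ => u p.1 p.2)
    (hutcont : Continuous fun p : ℝ × ℝ => ut p.1 p.2)
    (hbelow : ∃ m : ℝ, ∀ t ≥ (0:ℝ), ∀ x, m ≤ u t x)
    (huint : ∀ t ≥ (0:ℝ), ∀ x, Integrable fun y => K x y * u t y)
    (hderiv : ∀ x : ℝ, ∀ t > (0:ℝ), HasDerivAt (fun s => u s x) (ut t x) t)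
    (hineq : ∀ x : ℝ, ∀ t > (0:ℝ), (∫ y, K x y * u t y) + a t x * u t x ≤ ut t x)
    (h0 : ∀ x, 0 ≤ u 0 x) :
    ∀ t > (0:ℝ), ∀ x, 0 ≤ u t x :=
  stmt5_general K a u ut hKpos hKint hKbdd habdd hucont hbelow huint hderiv hineq h0
end

section
/- Let ω > 0, A > 0, ε* ∈ (0,1), C* > 0 and suppose the sequences (ξ_n), (h_n), (δ_n) satisfy: h₀ > 0, δ₀ ≤ min{ (ε*ω)/(8A), 1 − ε*/2, (ω/(4A))·(ε*/2)·(1 − ε*/2) }, h₀ ≤ 1, and recursively ξ_n ∈ [ξ_{n−1} − 2Aδ_{n−1}/ω, ξ_{n−1} + ε* h_{n−1}], 0 ≤ h_n ≤ h_{n−1}(1 − ε*) + 4Aδ_{n−1}/ω, 0 ≤ δ_n ≤ (δ_{n−1} e^{−ω} + C* ε* h_{n−1}) e^{−ω(T−1)} where T > 1 is chosen so that (e^{−ω} + C*ε*) e^{−ω(T−1)} ≤ min{1 − ε*/2, (ω/(4A))·(ε*/2)·(1 − ε*/2)}. Then h_n ≤ (1 − ε*/2)^n and δ_n ≤ (1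 − ε*/2)^{n−1} · min{1 − ε*/2, (ω/(4A))·(ε*/2)·(1 − ε*/2)} for all n ≥ 1, and (ξ_n) is a Cauchy sequence converging at geometric rate 1 − ε*/2. -/
set_option maxHeartbeats 1000000


/-- arithmetic core of the squeezing argument: geometric decay of
front widths `h n` and errors `δ n`, and geometric convergence of shifts `ξ n`. -/
theorem stmt8
    (ω A εs Cs T : ℝ) (ξ h δ : ℕ → ℝ)
    (hω : 0 < ω) (hA : 0 < A) (hε : εs ∈ Set.Ioo (0:ℝ) 1) (hC : 0 < Cs)
    (hT : 1 < T)
    (hTineq : (Real.exp (-ω) + Cs * εs) * Real.exp (-ω * (T - 1)) ≤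
      min (1 - εs / 2) (ω / (4 * A) * (εs / 2) * (1 - εs / 2)))
    (hh0pos : 0 < h 0) (hh0 : h 0 ≤ 1)
    (hδ0 : δ 0 ≤ min (εs * ω / (8 * A))
      (min (1 - εs / 2) (ω / (4 * A) * (εs / 2) * (1 - εs / 2))))
    (hhnn : ∀ n, 0 ≤ h n) (hδnn : ∀ n, 0 ≤ δ n)
    (hξrec : ∀ n, ξ (n + 1) ∈ Set.Icc (ξ n - 2 * A * δ n / ω) (ξ n + εs * h n))
    (hhrec : ∀ n, h (n + 1) ≤ h n * (1 - εs) + 4 * A * δ n / ω)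
    (hδrec : ∀ n, δ (n + 1) ≤ (δ n * Real.exp (-ω) + Cs * εs * h n) *
      Real.exp (-ω * (T - 1))) :
    (∀ n ≥ 1, h n ≤ (1 - εs / 2) ^ n ∧
      δ n ≤ (1 - εs / 2) ^ (n - 1) *
        min (1 - εs / 2) (ω / (4 * A) * (εs / 2) * (1 - εs / 2))) ∧
    CauchySeq ξ ∧
    ∃ C > 0, ∀ n, |ξ (n + 1) - ξ n| ≤ C * (1 - εs / 2) ^ n := by
  obtain ⟨hε0, hε1⟩ := hε
  set r : ℝ := 1 - εs / 2 with hrdef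
  set M : ℝ := min (1 - εs / 2) (ω / (4 * A) * (εs / 2) * (1 - εs / 2)) with hMdef
  have hMr : M ≤ r := min_le_left _ _
  have hM2 : M ≤ ω / (4 * A) * (εs / 2) * r := min_le_right _ _
  have hM0 : 0 < M := lt_min (by linarith) (mul_pos (mul_pos (by positivity) (by positivity)) (by linarith))
  clear_value r M
  clear hMdef
  have hr0 : 0 < r := by rw [hrdef]; linarith
  have hr1 : r < 1 := by rw [hrdef]; linarith
  have hM2' : 4 * A * M ≤ ω * (εs / 2) * r := by
    have h4A : (0:ℝ) < 4 * A := by linarith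
    rw [div_mul_eq_mul_div, div_mul_eq_mul_div, le_div_iff₀ h4A] at hM2
    nlinarith
  have hδ0M : δ 0 ≤ M := le_trans hδ0 (min_le_right _ _)
  have hδ0' : 8 * A * δ 0 ≤ εs * ω := by
    have := le_trans hδ0 (min_le_left _ _)
    rw [le_div_iff₀ (by linarith : (0:ℝ) < 8 * A)] at this
    linarith
  have e1 : (0:ℝ) < Real.exp (-ω * (T - 1)) := Real.exp_pos _
  have e2 : (0:ℝ) < Real.exp (-ω) := Real.exp_pos _
  have hCε : (0:ℝ) < Cs * εs := mul_pos hC hε0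
  -- main induction
  have key : ∀ n ≥ 1, h n ≤ r ^ n ∧ δ n ≤ r ^ (n - 1) * M := by
    intro n hn
    induction n, hn using Nat.le_induction with
    | base =>
      constructor
      · have hd : 4 * A * δ 0 / ω ≤ εs / 2 := by
          rw [div_le_iff₀ hω]; nlinarith
        have := hhrec 0
        have hh01 : h 0 * (1 - εs) ≤ 1 - εs := by nlinarith
        have : h 1 ≤ 1 - εs / 2 := by linarith
        rw [pow_one, hrdef]; linarith
      · have hδ01 : δ 0 ≤ 1 := by
          have : M ≤ 1 := le_trans hMr (by rw [hrdef]; linarith)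
          linarith
        have b1 : δ 0 * Real.exp (-ω) ≤ 1 * Real.exp (-ω) :=
          mul_le_mul_of_nonneg_right hδ01 e2.le
        have b2 : Cs * εs * h 0 ≤ Cs * εs * 1 :=
          mul_le_mul_of_nonneg_left hh0 hCε.le
        have hin : δ 0 * Real.exp (-ω) + Cs * εs * h 0 ≤ Real.exp (-ω) + Cs * εs := by
          linarith
        have h3 : δ 1 ≤ (Real.exp (-ω) + Cs * εs) * Real.exp (-ω * (T - 1)) :=
          le_trans (hδrec 0) (mul_le_mul_of_nonneg_right hin e1.le)
        simpa using le_trans h3 hTineq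
    | succ n hn ih =>
      obtain ⟨m, rfl⟩ : ∃ m, n = m + 1 := ⟨n - 1, (Nat.succ_pred_eq_of_pos hn).symm⟩
      obtain ⟨ihh, ihδ⟩ := ih
      simp only [Nat.add_sub_cancel] at ihδ ⊢
      have hrm : (0:ℝ) ≤ r ^ m := pow_nonneg hr0.le m
      have hrm1 : (0:ℝ) ≤ r ^ (m + 1) := pow_nonneg hr0.le _
      have hp1 : r ^ (m + 1) = r ^ m * r := pow_succ r m
      have hp2 : r ^ (m + 2) = r ^ (m + 1) * r := pow_succ r (m + 1)
      constructor
      · -- h bound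
        have hd : 4 * A * δ (m + 1) / ω ≤ r ^ m * (εs / 2) * r := by
          rw [div_le_iff₀ hω]
          have h1 : 4 * A * δ (m + 1) ≤ 4 * A * (r ^ m * M) := by nlinarith
          have h2 : r ^ m * (4 * A * M) ≤ r ^ m * (ω * (εs / 2) * r) :=
            mul_le_mul_of_nonneg_left hM2' hrm
          nlinarith
        have := hhrec (m + 1)
        have hh1 : h (m + 1) * (1 - εs) ≤ r ^ (m + 1) * (1 - εs) := by
          have : (0:ℝ) ≤ 1 - εs := by linarith
          exact mul_le_mul_of_nonneg_right ihh this
        have goal : h (m + 2) ≤ r ^ (m + 1) * (1 - εs) + r ^ m * (εs / 2) * r := by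
          linarith
        have : r ^ (m + 1) * (1 - εs) + r ^ m * (εs / 2) * r = r ^ (m + 2) := by
          rw [hp1, hp2, hrdef]; ring
        linarith
      · -- δ bound
        have hδle : δ (m + 1) ≤ r ^ (m + 1) := by
          have h1 : r ^ m * M ≤ r ^ m * r := mul_le_mul_of_nonneg_left hMr hrm
          rw [hp1]; linarith
        have b1 : δ (m + 1) * Real.exp (-ω) ≤ r ^ (m + 1) * Real.exp (-ω) :=
          mul_le_mul_of_nonneg_right hδle e2.le
        have b2 : Cs * εs * h (m + 1) ≤ Cs * εs * r ^ (m + 1) :=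
          mul_le_mul_of_nonneg_left ihh hCε.le
        have hin : δ (m + 1) * Real.exp (-ω) + Cs * εs * h (m + 1) ≤
            r ^ (m + 1) * (Real.exp (-ω) + Cs * εs) := by ring_nf; ring_nf at b1 b2; linarith
        have step1 : δ (m + 2) ≤ r ^ (m + 1) * ((Real.exp (-ω) + Cs * εs) *
            Real.exp (-ω * (T - 1))) := by
          have h4 := le_trans (hδrec (m + 1)) (mul_le_mul_of_nonneg_right hin e1.le)
          calc δ (m + 2) ≤ r ^ (m + 1) * (Real.exp (-ω) + Cs * εs) *
              Real.exp (-ω * (T - 1)) := h4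
            _ = r ^ (m + 1) * ((Real.exp (-ω) + Cs * εs) * Real.exp (-ω * (T - 1))) := by
              ring
        exact le_trans step1 (mul_le_mul_of_nonneg_left hTineq hrm1)
  -- bound on increments
  have incr : ∀ n, |ξ (n + 1) - ξ n| ≤ 1 * r ^ n := by
    intro n
    obtain ⟨hlo, hhi⟩ := hξrec n
    rw [one_mul, abs_le]
    have hrn : (0:ℝ) ≤ r ^ n := pow_nonneg hr0.le n
    rcases Nat.eq_zero_or_pos n with rfl | hn
    · constructor
      · have : 2 * A * δ 0 / ω ≤ εs / 4 := by
          rw [div_le_iff₀ hω]; linarith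
        simp only [pow_zero]
        linarith
      · have : εs * h 0 ≤ εs := by nlinarith [hε0, hh0, hhnn 0]
        simp only [pow_zero]
        linarith
    · obtain ⟨hhb, hδb⟩ := key n hn
      obtain ⟨m, rfl⟩ : ∃ m, n = m + 1 := ⟨n - 1, (Nat.succ_pred_eq_of_pos hn).symm⟩
      simp only [Nat.add_sub_cancel] at hδb
      have hrm : (0:ℝ) ≤ r ^ m := pow_nonneg hr0.le m
      have hp1 : r ^ (m + 1) = r ^ m * r := pow_succ r m
      constructor
      · have hd : 2 * A * δ (m + 1) / ω ≤ r ^ (m + 1) := by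
          rw [div_le_iff₀ hω]
          have h1 : 2 * A * δ (m + 1) ≤ 2 * A * (r ^ m * M) := by nlinarith
          have h2 : r ^ m * (4 * A * M) ≤ r ^ m * (ω * (εs / 2) * r) :=
            mul_le_mul_of_nonneg_left hM2' hrm
          have hr1' : r ^ m * (ω * (εs / 2) * r) ≤ r ^ m * r * ω := by
            have h3 : (0:ℝ) ≤ r ^ m * r * ω := mul_nonneg (mul_nonneg hrm hr0.le) hω.le
            nlinarith [mul_le_mul_of_nonneg_left (show εs / 2 ≤ 1 by linarith) h3]
          rw [hp1]; nlinarith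
        linarith
      · have : εs * h (m + 1) ≤ r ^ (m + 1) := by nlinarith
        linarith
  refine ⟨key, ?_, 1, one_pos, fun n => incr n⟩
  exact cauchySeq_of_le_geometric r 1 hr1 (fun n => by
    rw [Real.dist_eq, abs_sub_comm]; exact incr n)
end

section
/- Let u : ℝ × ℝ → (0,1) be nonincreasing in x with uniform limits u(t, x + X(t)) → 1 (x → −∞) and → 0 (x → ∞) in t, where X is continuous. Suppose there exist t₀-independent constants C > 0, ω* > 0 and shifts ξ_{t₀} with sup_{t₀} |ξ_{t₀}| < ∞ such that a fixed function v : ℝ × ℝ → (0,1) satisfies sup_x |v(t,x) − u(t, x − ξ_{t₀})| ≤ C e^{−ω*(t − t₀)} for all t ≥ t₀ and all t₀ ∈ ℝ. Then there exists ξ ∈ ℝ such that v(t,x) = u(t, x − ξ) for all (t,x) ∈ ℝ × ℝ. -/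
set_option maxHeartbeats 1000000 in
/-- the limiting argument in the uniqueness theorem: a uniform
exponential stability estimate with bounded shifts, valid for every initial
time, forces `v` to be a fixed spatial shift of `u`. -/
theorem stmt10
    (u v : ℝ → ℝ → ℝ) (X ξ : ℝ → ℝ) (C ωs : ℝ)
    (hu01 : ∀ t x, u t x ∈ Set.Ioo (0:ℝ) 1)
    (hv01 : ∀ t x, v t x ∈ Set.Ioo (0:ℝ) 1)
    (humono : ∀ t, Antitone (u t))
    (hucont : Continuous fun p : ℝ × ℝ => u p.1 p.2)
    (hXcont : Continuous X)
    (hlim1 : ∀ ε > 0, ∃ M : ℝ, ∀ t : ℝ, ∀ x ≤ -M, 1 - ε < u t (x + X t))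
    (hlim0 : ∀ ε > 0, ∃ M : ℝ, ∀ t : ℝ, ∀ x ≥ M, u t (x + X t) < ε)
    (hC : 0 < C) (hω : 0 < ωs)
    (hξbdd : ∃ B : ℝ, ∀ t₀, |ξ t₀| ≤ B)
    (hstab : ∀ t₀ : ℝ, ∀ t ≥ t₀, ∀ x,
      |v t x - u t (x - ξ t₀)| ≤ C * Real.exp (-ωs * (t - t₀))) :
    ∃ xiInf : ℝ, ∀ t x, v t x = u t (x - xiInf) := by
  obtain ⟨B, hB⟩ := hξbdd
  have hmem : ∀ n : ℕ, ξ (-(n : ℝ)) ∈ Set.Icc (-B) B := fun n => abs_le.mp (hB _)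
  obtain ⟨a, -, φ, hφ, hlim⟩ := isCompact_Icc.tendsto_subseq hmem
  refine ⟨a, fun t x => ?_⟩
  have hc : Continuous fun y : ℝ => u t (x - y) :=
    hucont.comp (continuous_const.prodMk (continuous_const.sub continuous_id))
  have h1 : Filter.Tendsto (fun n : ℕ => u t (x - ξ (-(φ n : ℝ)))) Filter.atTop
      (nhds (u t (x - a))) := (hc.tendsto a).comp hlim
  have hφtop : Filter.Tendsto (fun n : ℕ => (φ n : ℝ)) Filter.atTop Filter.atTop :=
    tendsto_natCast_atTop_atTop.comp hφ.tendsto_atTop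
  have hexp : Filter.Tendsto (fun n : ℕ => C * Real.exp (-(ωs * (t + (φ n : ℝ)))))
      Filter.atTop (nhds 0) := by
    have h3 : Filter.Tendsto (fun n : ℕ => -(ωs * (t + (φ n : ℝ)))) Filter.atTop
        Filter.atBot := by
      have h4 : Filter.Tendsto (fun n : ℕ => t + (φ n : ℝ)) Filter.atTop Filter.atTop := by
        simpa using (Filter.tendsto_atTop_add_const_left _ t hφtop)
      exact (Filter.tendsto_neg_atBot_iff.mpr (h4.const_mul_atTop hω)).congr (by
        intro n; ring)
    have := Filter.Tendsto.const_mul C (Real.tendsto_exp_atBot.comp h3)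
    simpa using this
  have h2 : Filter.Tendsto (fun n : ℕ => u t (x - ξ (-(φ n : ℝ)))) Filter.atTop
      (nhds (v t x)) := by
    rw [tendsto_iff_dist_tendsto_zero]
    apply squeeze_zero' (Filter.Eventually.of_forall fun n => dist_nonneg)
    · filter_upwards [hφtop.eventually_ge_atTop (-t)] with n hn
      have := hstab (-(φ n : ℝ)) t (by linarith) x
      simpa [Real.dist_eq, abs_sub_comm] using this
    · exact hexp
  have := tendsto_nhds_unique h2 h1
  exact this
end
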